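/- arXiv:1508.07692 — 3 statements merged into one kernel-verified Lean document; each statement's English description precedes it below -/
import Mathlib

section
/- For each natural number k ≥ 1, the map f_k : Δ → ℂ², f_k(z) = (kz, z/k + 1), where Δ is the open unit disc in ℂ, maps Δ into the tube domain T_D = D + iℝ² over D = {(x₁,x₂) : 0 < x₂ < 2} \ ({-1}×[1,2] ∪ {1}×[0,1]); i.e., for every z ∈ Δ, the point (Re(kz), Re(z/k + 1)) lies in D. -/
open Set

theorem fk_maps_disc_into_tube
    (D : Set (ℝ × ℝ))
    (hD : D = {p : ℝ × ℝ | 0 < p.2 ∧ p.2 < 2} \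
      (({-1} ×ˢ Icc (1:ℝ) 2) ∪ ({1} ×ˢ Icc (0:ℝ) 1))) :
    ∀ (k : ℕ), 1 ≤ k → ∀ z ∈ Metric.ball (0:ℂ) 1,
      ((((k:ℂ) * z).re, ((z / (k:ℂ)) + 1).re) : ℝ × ℝ) ∈ D := by
  intro k hk z hz
  have hk0 : (0:ℝ) < k := by exact_mod_cast hk
  have hk1 : (1:ℝ) ≤ k := by exact_mod_cast hk
  have habs : ‖z‖ < 1 := by simpa using hz
  have hre : |z.re| < 1 := lt_of_le_of_lt (Complex.abs_re_le_norm z) habs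
  have h1 : -1 < z.re := neg_lt_of_abs_lt hre
  have h2 : z.re < 1 := lt_of_abs_lt hre
  have hmul : ((k:ℂ) * z).re = k * z.re := by simp
  have hdiv : ((z / (k:ℂ)) + 1).re = z.re / k + 1 := by
    rw [Complex.add_re, Complex.div_re]
    simp [Complex.normSq_natCast]
    rw [div_eq_div_iff (by positivity) hk0.ne']
    ring
  have hdabs : |z.re / k| < 1 := by
    rw [abs_div, abs_of_pos hk0]
    calc |z.re| / k ≤ |z.re| / 1 :=
          div_le_div_of_nonneg_left (abs_nonneg _) one_pos hk1
      _ < 1 := by simpa using hre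
  have hd1 : -1 < z.re / k := neg_lt_of_abs_lt hdabs
  have hd2 : z.re / k < 1 := lt_of_abs_lt hdabs
  rw [hD, hmul, hdiv]
  refine ⟨⟨by simp; linarith, by simp; linarith⟩, ?_⟩
  intro hmem
  rcases hmem with h | h
  · obtain ⟨ha, hb⟩ := h
    simp only [mem_singleton_iff] at ha
    simp only [mem_Icc] at hb
    have hz0 : z.re < 0 := by nlinarith
    have : z.re / k < 0 := div_neg_of_neg_of_pos hz0 hk0
    linarith [hb.1]
  · obtain ⟨ha, hb⟩ := h
    simp only [mem_singleton_iff] at ha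
    simp only [mem_Icc] at hb
    have hz0 : 0 < z.re := by nlinarith
    have : 0 < z.re / k := div_pos hz0 hk0
    linarith [hb.2]
end

section
/- The tube domain T_D over D = {(x₁,x₂) : 0 < x₂ < 2} \ ({-1}×[1,2] ∪ {1}×[0,1]) is not Kobayashi hyperbolic, in the following sense: there exist a point p ∈ T_D and a sequence of holomorphic maps f_k : Δ → T_D with f_k(0) = p for all k and ‖df_k(0)‖ → ∞. -/
open Set Filter

theorem tube_over_D_not_hyperbolic
    (D : Set (ℝ × ℝ))
    (hD : D = {p : ℝ × ℝ | 0 < p.2 ∧ p.2 < 2} \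
      (({-1} ×ˢ Icc (1:ℝ) 2) ∪ ({1} ×ˢ Icc (0:ℝ) 1)))
    (T : Set (ℂ × ℂ))
    (hT : T = {z : ℂ × ℂ | ((z.1.re, z.2.re) : ℝ × ℝ) ∈ D}) :
    ∃ p ∈ T, ∃ f : ℕ → ℂ → ℂ × ℂ, ∃ v : ℕ → ℂ × ℂ,
      (∀ k, DifferentiableOn ℂ (f k) (Metric.ball (0:ℂ) 1)) ∧
      (∀ k, MapsTo (f k) (Metric.ball (0:ℂ) 1) T) ∧
      (∀ k, f k 0 = p) ∧
      (∀ k, HasDerivAt (f k) (v k) 0) ∧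
      Tendsto (fun k => ‖v k‖) atTop atTop := by
  refine ⟨((0:ℂ), (1:ℂ)), ?_, fun k z => ((k:ℂ) * z, 1 + z / 2),
    fun k => ((k:ℂ), 1 / 2), ?_, ?_, ?_, ?_, ?_⟩
  · simp [hT, hD]
  · intro k
    apply Differentiable.differentiableOn
    fun_prop
  · intro k z hz
    have hzre : |z.re| < 1 := lt_of_le_of_lt (Complex.abs_re_le_norm z) (by
      simpa [Complex.norm_def] using (mem_ball_zero_iff.mp hz))
    have h1 : -1 < z.re := neg_lt_of_abs_lt hzre
    have h2 : z.re < 1 := lt_of_abs_lt hzre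
    have hk : (0:ℝ) ≤ (k:ℝ) := Nat.cast_nonneg k
    have hre1 : ((k:ℂ) * z).re = (k:ℝ) * z.re := by
      simp [Complex.mul_re]
    have hre2 : ((1:ℂ) + z / 2).re = 1 + z.re / 2 := by
      simp [Complex.add_re, Complex.div_re, Complex.normSq]
    simp only [hT, hD, mem_setOf_eq, mem_diff, mem_union, mem_prod,
      mem_singleton_iff, mem_Icc, hre1, hre2]
    constructor
    · constructor <;> linarith
    · rintro (⟨hx, hy1, hy2⟩ | ⟨hx, hy1, hy2⟩)
      · nlinarith
      · nlinarith
  · intro k; simp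
  · intro k
    have h1 : HasDerivAt (fun z : ℂ => (k:ℂ) * z) (k:ℂ) 0 := by
      simpa using (hasDerivAt_id (0:ℂ)).const_mul (k:ℂ)
    have h2 : HasDerivAt (fun z : ℂ => (1:ℂ) + z / 2) (1 / 2 : ℂ) 0 := by
      simpa using ((hasDerivAt_id (0:ℂ)).div_const 2).const_add (1:ℂ)
    exact h1.prodMk h2
  · apply tendsto_atTop_mono (fun k => ?_) tendsto_natCast_atTop_atTop
    calc ((k:ℝ)) = ‖((k:ℂ), (1/2:ℂ)).1‖ := by simp
    _ ≤ ‖((k:ℂ), (1/2:ℂ))‖ := norm_fst_le _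
end

section
/- Let D ⊂ ℝ² be an open set contained in {x₂ > 0} such that there exists (a₁,a₂) ∈ D and for every k ∈ ℕ an affine function γ_k(t) = c_k t + d_k with (t, γ_k(t)) ∈ D and |γ_k(t) − a₂| ≤ 1/k for all t ∈ [−k,k]. Then the tube domain T_D is not Kobayashi hyperbolic, in the sense that there is no neighborhood U of (a₁, a₂+0i) in T_D and constant M > 0 such that every holomorphic map f : Δ → T_D with f(0) ∈ U satisfies ‖df(0)‖ < M. -/
open Set Filter

theorem tube_not_hyperbolic_of_affine_obstruction
    (D : Set (ℝ × ℝ)) (hDopen : IsOpen D) (hDconn : IsConnected D)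
    (hDhalf : D ⊆ {p : ℝ × ℝ | 0 < p.2})
    (a₁ a₂ : ℝ) (ha : ((a₁, a₂) : ℝ × ℝ) ∈ D)
    (c d : ℕ → ℝ)
    (h : ∀ k : ℕ, 1 ≤ k → ∀ t ∈ Icc (-(k:ℝ)) (k:ℝ),
      ((t, c k * t + d k) : ℝ × ℝ) ∈ D ∧ |c k * t + d k - a₂| ≤ 1 / k)
    (T : Set (ℂ × ℂ))
    (hT : T = {z : ℂ × ℂ | ((z.1.re, z.2.re) : ℝ × ℝ) ∈ D}) :
    ¬ ∃ (U : Set (ℂ × ℂ)), IsOpen U ∧ (((a₁:ℂ), (a₂:ℂ)) : ℂ × ℂ) ∈ U ∧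
      ∃ M > (0:ℝ), ∀ f : ℂ → ℂ × ℂ,
        DifferentiableOn ℂ f (Metric.ball (0:ℂ) 1) →
        MapsTo f (Metric.ball (0:ℂ) 1) T →
        f 0 ∈ U →
        ∀ v : ℂ × ℂ, HasDerivAt f v 0 → ‖v‖ < M := by
  rintro ⟨U, hUopen, hUmem, M, hM, hall⟩
  obtain ⟨ε, hε, hball⟩ := Metric.isOpen_iff.1 hUopen _ hUmem
  obtain ⟨k, hk⟩ := exists_nat_gt (max (max (|a₁| + M) (1/ε)) 1)
  have hk1 : (1:ℝ) ≤ k := le_of_lt (lt_of_le_of_lt (le_max_right _ _) hk)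
  have hk1' : 1 ≤ k := by exact_mod_cast hk1
  have hkaM : |a₁| + M < (k:ℝ) :=
    lt_of_le_of_lt (le_trans (le_max_left _ _) (le_max_left _ _)) hk
  have hkε : 1/ε < (k:ℝ) :=
    lt_of_le_of_lt (le_trans (le_max_right _ _) (le_max_left _ _)) hk
  have hinvk : 1/(k:ℝ) < ε := by
    rw [div_lt_iff₀ (by linarith : (0:ℝ) < (k:ℝ))]
    rw [div_lt_iff₀ hε] at hkε
    nlinarith
  set R : ℝ := (k:ℝ) - |a₁| with hR
  have hRpos : 0 < R := by have := abs_nonneg a₁; simp only [hR]; nlinarith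
  have hMR : M < R := by simp only [hR]; linarith
  set f : ℂ → ℂ × ℂ := fun z =>
    ((a₁:ℂ) + (R:ℂ)*z, (c k : ℂ) * ((a₁:ℂ) + (R:ℂ)*z) + (d k : ℂ)) with hf
  have hdiff1 : Differentiable ℂ (fun z : ℂ => (a₁:ℂ) + (R:ℂ)*z) :=
    (differentiable_const _).add ((differentiable_const _).mul differentiable_id)
  have hdiff : Differentiable ℂ f :=
    hdiff1.prodMk (((differentiable_const _).mul hdiff1).add_const _)
  -- real parts
  have hre1 : ∀ z : ℂ, ((a₁:ℂ) + (R:ℂ)*z).re = a₁ + R * z.re := by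
    intro z; simp [Complex.add_re, Complex.mul_re]
  have hre2 : ∀ z : ℂ, ((c k : ℂ) * ((a₁:ℂ) + (R:ℂ)*z) + (d k : ℂ)).re
      = c k * (a₁ + R * z.re) + d k := by
    intro z
    simp [Complex.add_re, Complex.mul_re, hre1 z]
  have hmaps : MapsTo f (Metric.ball (0:ℂ) 1) T := by
    intro z hz
    rw [hT]
    simp only [mem_setOf_eq, hf]
    have hzre : |z.re| < 1 := by
      have := Complex.abs_re_le_norm z
      simp only [Metric.mem_ball, Complex.dist_eq, sub_zero] at hz
      calc |z.re| ≤ ‖z‖ := this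
        _ < 1 := hz
    have ht : a₁ + R * z.re ∈ Icc (-(k:ℝ)) (k:ℝ) := by
      constructor
      · have : R * z.re ≥ -R := by nlinarith [abs_le.1 (le_of_lt hzre)]
        have ha' := neg_abs_le a₁
        simp only [hR] at *; linarith
      · have : R * z.re ≤ R := by nlinarith [abs_le.1 (le_of_lt hzre)]
        have ha' := le_abs_self a₁
        simp only [hR] at *; linarith
    have := (h k hk1' _ ht).1
    simpa [hre1 z, hre2 z] using this
  have hf0 : f 0 ∈ U := by
    apply hball
    have ha₁Icc : a₁ ∈ Icc (-(k:ℝ)) (k:ℝ) := by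
      constructor
      · have := neg_abs_le a₁; linarith
      · have := le_abs_self a₁; linarith
    have hclose := (h k hk1' a₁ ha₁Icc).2
    have hfz : f 0 = ((a₁:ℂ), ((c k * a₁ + d k : ℝ) : ℂ)) := by
      simp only [hf, mul_zero, add_zero]
      push_cast
      ring_nf
    have hd : dist (f 0) (((a₁:ℂ), (a₂:ℂ)) : ℂ × ℂ) ≤ |c k * a₁ + d k - a₂| := by
      rw [hfz, Prod.dist_eq]
      have h1 : dist (a₁:ℂ) (a₁:ℂ) = 0 := dist_self _
      have h2 : dist (((c k * a₁ + d k : ℝ)):ℂ) ((a₂:ℝ):ℂ) = |c k * a₁ + d k - a₂| := by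
        rw [Complex.dist_eq, ← Complex.ofReal_sub, Complex.norm_real, Real.norm_eq_abs]
      rw [h1, h2]
      exact max_le (abs_nonneg _) le_rfl
    exact Metric.mem_ball.2 (lt_of_le_of_lt hd (lt_of_le_of_lt hclose hinvk))
  have hderiv : HasDerivAt f ((R:ℂ), (c k : ℂ) * (R:ℂ)) 0 := by
    have h1 : HasDerivAt (fun z : ℂ => (a₁:ℂ) + (R:ℂ)*z) (R:ℂ) 0 := by
      simpa using ((hasDerivAt_id (0:ℂ)).const_mul (R:ℂ)).const_add (a₁:ℂ)
    exact h1.prodMk ((h1.const_mul (c k : ℂ)).add_const _)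
  have := hall f hdiff.differentiableOn hmaps hf0 _ hderiv
  have hge : R ≤ ‖((R:ℂ), (c k : ℂ) * (R:ℂ))‖ := by
    have := norm_fst_le ((R:ℂ), (c k : ℂ) * (R:ℂ))
    simpa [Complex.norm_real, abs_of_pos hRpos] using this
  linarith
end
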